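/- Let E be a row-finite directed graph and let v ∈ E⁰ be a line point. Then the ℤ-order ideal ⟨v⟩ of T_E is isomorphic, as a ℤ-monoid, to ⊕_{j∈ℤ} ℕ, where ℤ acts on ⊕_{j∈ℤ} ℕ by right shifts: ⁿ(k_j)_{j∈ℤ} = (k_{j-n})_{j∈ℤ}. Moreover, every element x ∈ ⟨v⟩ has a unique representation x = Σ_j k_j v(j) with k_j ∈ ℕ. -/

import Mathlib

/-- A directed graph: a set of vertices `V`, a set of edges `Ed`,
and source and range maps. -/
structure DGraph (V : Type) (Ed : Type) where
  s : Ed → V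
  r : Ed → V

namespace DGraph

variable {V Ed : Type} (G : DGraph V Ed)

/-- A sink is a vertex emitting no edges. -/
def IsSink (v : V) : Prop := ∀ e : Ed, G.s e ≠ v

/-- A source is a vertex receiving no edges. -/
def IsSource (v : V) : Prop := ∀ e : Ed, G.r e ≠ v

/-- A graph is row-finite if every vertex emits finitely many edges. -/
def RowFinite : Prop := ∀ v : V, {e : Ed | G.s e = v}.Finite

theorem rowFinite_of_finite [Finite Ed] : G.RowFinite := fun _ => Set.toFinite _

/-- There is an edge from `u` to `w`. -/
def Step (u w : V) : Prop := ∃ e : Ed, G.s e = u ∧ G.r e = w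

/-- `u` flows to `w`: `u = w` or there is a path from `u` to `w`. -/
def FlowsTo (u w : V) : Prop := Relation.ReflTransGen G.Step u w

/-- Strongly connected graph. -/
def StronglyConnected : Prop := ∀ u w : V, G.FlowsTo u w

/-- A (finite) path of length `≥ 1`: a nonempty list of consecutive edges. -/
structure GPath (G : DGraph V Ed) where
  edges : List Ed
  ne : edges ≠ []
  chain : edges.Chain' (fun e f => G.r e = G.s f)

namespace GPath

variable {G}

/-- The source of a path. -/
def src (p : G.GPath) : V := G.s (p.edges.head p.ne)

/-- The range of a path. -/
def tgt (p : G.GPath) : V := G.r (p.edges.getLast p.ne)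

/-- The length of a path. -/
def length (p : G.GPath) : ℕ := p.edges.length

/-- The set of vertices of a path (the sources of its edges). -/
def vset (p : G.GPath) : Set V := {v | ∃ e ∈ p.edges, G.s e = v}

/-- A cycle: a closed path with pairwise distinct edges. -/
def IsCycle (p : G.GPath) : Prop := p.src = p.tgt ∧ p.edges.Nodup

/-- The path (cycle) has an exit: an edge `f` with `s f = s eᵢ` but `f ≠ eᵢ`. -/
def HasExit (p : G.GPath) : Prop := ∃ (f e : Ed), e ∈ p.edges ∧ G.s f = G.s e ∧ f ≠ e

/-- An extreme cycle: a cycle with an exit such that every path leaving it returns to it. -/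
def IsExtremeCycle (p : G.GPath) : Prop :=
  p.IsCycle ∧ p.HasExit ∧
    ∀ lam : G.GPath, lam.src ∈ p.vset → ∃ w ∈ p.vset, G.FlowsTo lam.tgt w

end GPath

/-- Lengths of closed paths based at `v`. -/
def closedLens (v : V) : Set ℕ :=
  {n | ∃ p : G.GPath, p.src = v ∧ p.tgt = v ∧ p.length = n}

/-- `d` is the period of `v`: the greatest common divisor of the lengths of closed
paths based at `v`. -/
def IsPeriodOf (d : ℕ) (v : V) : Prop :=
  (∀ n ∈ G.closedLens v, d ∣ n) ∧ ∀ k : ℕ, (∀ n ∈ G.closedLens v, k ∣ n) → k ∣ d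

/-- A line point: no vertex that `v` flows to has a bifurcation or lies on a closed path. -/
def LinePoint (v : V) : Prop :=
  ∀ w : V, G.FlowsTo v w →
    (∀ e f : Ed, G.s e = w → G.s f = w → e = f) ∧
      ¬ ∃ p : G.GPath, p.src = w ∧ p.tgt = w

end DGraph

section MonoidOrder

variable {M : Type} [AddCommMonoid M]

/-- The algebraic preorder on a commutative monoid: `a ≤ b` iff `a + c = b` for some `c`. -/
def MLe (a b : M) : Prop := ∃ c : M, a + c = b

/-- An order ideal of a commutative monoid. -/
structure IsOrderIdeal (I : Set M) : Prop where
  zero_mem : (0 : M) ∈ I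
  add_mem : ∀ {a b : M}, a ∈ I → b ∈ I → a + b ∈ I
  mem_of_le : ∀ {a b : M}, b ∈ I → MLe a b → a ∈ I

/-- The order ideal generated by an element `x`: all `y` with `y ≤ n • x` for some `n`. -/
def orderIdealGen (x : M) : Set M := {y | ∃ n : ℕ, MLe y (n • x)}

/-- A simple order ideal: a nonzero order ideal whose only order sub-ideals are `0` and itself. -/
def IsSimpleOrderIdeal (I : Set M) : Prop :=
  IsOrderIdeal I ∧ I ≠ {0} ∧ ∀ J : Set M, IsOrderIdeal J → J ⊆ I → J = {0} ∨ J = I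

/-- The nonzero elements of `I` form a group under addition. -/
def NonzeroGroup (I : Set M) : Prop :=
  (∀ x ∈ I, ∀ y ∈ I, x ≠ 0 → y ≠ 0 → x + y ≠ 0) ∧
    ∃ e ∈ I, e ≠ (0 : M) ∧ (∀ x ∈ I, x ≠ 0 → e + x = x) ∧
      ∀ x ∈ I, x ≠ 0 → ∃ y ∈ I, y ≠ 0 ∧ x + y = e

/-- The congruence on a commutative monoid associated to an ideal `I`:
`a ≈ b` iff `a + c = b + d` for some `c, d ∈ I`. -/
def idealCon (I : Set M) (h0 : (0 : M) ∈ I)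
    (hadd : ∀ {a b : M}, a ∈ I → b ∈ I → a + b ∈ I) : AddCon M where
  r a b := ∃ c ∈ I, ∃ d ∈ I, a + c = b + d
  iseqv := by
    refine ⟨fun a => ⟨0, h0, 0, h0, rfl⟩, ?_, ?_⟩
    · rintro a b ⟨c, hc, d, hd, h⟩
      exact ⟨d, hd, c, hc, h.symm⟩
    · rintro a b c ⟨x, hx, y, hy, h1⟩ ⟨x', hx', y', hy', h2⟩
      refine ⟨x + x', hadd hx hx', y' + y, hadd hy' hy, ?_⟩
      calc a + (x + x') = (a + x) + x' := (add_assoc _ _ _).symm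
        _ = (b + y) + x' := by rw [h1]
        _ = (b + x') + y := by rw [add_right_comm]
        _ = (c + y') + y := by rw [h2]
        _ = c + (y' + y) := add_assoc _ _ _
  add' := by
    rintro a b a' b' ⟨c, hc, d, hd, h1⟩ ⟨c', hc', d', hd', h2⟩
    refine ⟨c + c', hadd hc hc', d + d', hadd hd hd', ?_⟩
    rw [add_add_add_comm, h1, h2, add_add_add_comm]

end MonoidOrder

namespace DGraph

variable {V Ed : Type} (G : DGraph V Ed)

/-- The defining relations of the talented monoid, as a relation on the free
commutative monoid on `E⁰ × ℤ`. -/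
def talRel (hrf : G.RowFinite) (a b : (V × ℤ) →₀ ℕ) : Prop :=
  ∃ (v : V) (i : ℤ), ¬ G.IsSink v ∧ a = Finsupp.single (v, i) 1 ∧
    b = ∑ e ∈ (hrf v).toFinset, Finsupp.single (G.r e, i + 1) 1

/-- The congruence generated by the defining relations of the talented monoid. -/
noncomputable def talCon (hrf : G.RowFinite) : AddCon ((V × ℤ) →₀ ℕ) := addConGen (G.talRel hrf)

/-- The talented monoid `T_E` of a row-finite graph. -/
noncomputable def Tal (hrf : G.RowFinite) : Type := (G.talCon hrf).Quotient

noncomputable instance (hrf : G.RowFinite) : AddCommMonoid (G.Tal hrf) :=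
  inferInstanceAs (AddCommMonoid (G.talCon hrf).Quotient)

/-- The generator `v(i)` of the talented monoid. -/
noncomputable def gen (hrf : G.RowFinite) (v : V) (i : ℤ) : G.Tal hrf :=
  (G.talCon hrf).mk' (Finsupp.single (v, i) 1)

/-- The action of `n : ℤ` on the talented monoid, determined by `ⁿv(i) = v(i+n)`. -/
noncomputable def shift (hrf : G.RowFinite) (n : ℤ) : G.Tal hrf →+ G.Tal hrf :=
  AddCon.lift _
    ((AddCon.mk' _).comp
      (Finsupp.mapDomain.addMonoidHom (fun p : V × ℤ => (p.1, p.2 + n))))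
    (by
      apply AddCon.addConGen_le.mpr
      rintro a b ⟨v, i, hv, rfl, rfl⟩
      refine (AddCon.ker_rel _).mpr ?_
      show (G.talCon hrf).mk'
            (Finsupp.mapDomain (fun p : V × ℤ => (p.1, p.2 + n)) (Finsupp.single (v, i) 1)) =
          (G.talCon hrf).mk'
            (Finsupp.mapDomain (fun p : V × ℤ => (p.1, p.2 + n))
              (∑ e ∈ (hrf v).toFinset, Finsupp.single (G.r e, i + 1) 1))
      rw [Finsupp.mapDomain_single, Finsupp.mapDomain_finset_sum]
      simp only [Finsupp.mapDomain_single]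
      refine (AddCon.eq (G.talCon hrf)).mpr ?_
      refine AddConGen.Rel.of _ _ ⟨v, i + n, hv, rfl, ?_⟩
      exact Finset.sum_congr rfl fun e _ => by rw [add_right_comm])

end DGraph


namespace DGraph

variable {V Ed : Type} (G : DGraph V Ed)

/-- A ℤ-order ideal of the talented monoid: an order ideal closed under the ℤ-action. -/
def IsZOrderIdeal (hrf : G.RowFinite) (I : Set (G.Tal hrf)) : Prop :=
  IsOrderIdeal I ∧ ∀ (n : ℤ) (x : G.Tal hrf), x ∈ I → G.shift hrf n x ∈ I

/-- The ℤ-order ideal generated by a set `S`. -/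
def zIdealGen (hrf : G.RowFinite) (S : Set (G.Tal hrf)) : Set (G.Tal hrf) :=
  ⋂₀ {I : Set (G.Tal hrf) | G.IsZOrderIdeal hrf I ∧ S ⊆ I}

/-- A simple ℤ-order ideal: a nonzero ℤ-order ideal whose only ℤ-order sub-ideals
are `0` and itself. -/
def IsSimpleZIdeal (hrf : G.RowFinite) (I : Set (G.Tal hrf)) : Prop :=
  G.IsZOrderIdeal hrf I ∧ I ≠ {0} ∧
    ∀ J : Set (G.Tal hrf), G.IsZOrderIdeal hrf J → J ⊆ I → J = {0} ∨ J = I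

/-- The adjacency matrix of a graph: the `(u, w)` entry is the number of edges
from `u` to `w`. -/
noncomputable def adj : Matrix V V ℕ := Matrix.of fun u w => Nat.card {e : Ed // G.s e = u ∧ G.r e = w}

/-- The defining relations of the graph monoid `M_E`, as a relation on the free
commutative monoid on `E⁰`. -/
def gmRel (hrf : G.RowFinite) (a b : V →₀ ℕ) : Prop :=
  ∃ v : V, ¬ G.IsSink v ∧ a = Finsupp.single v 1 ∧
    b = ∑ e ∈ (hrf v).toFinset, Finsupp.single (G.r e) 1

/-- The graph monoid `M_E` of a row-finite graph. -/
noncomputable def GM (hrf : G.RowFinite) : Type := (addConGen (G.gmRel hrf)).Quotient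

noncomputable instance (hrf : G.RowFinite) : AddCommMonoid (G.GM hrf) :=
  inferInstanceAs (AddCommMonoid (addConGen (G.gmRel hrf)).Quotient)

/-- The smallest reflexive, transitive and additive relation on the free commutative
monoid on `E⁰` containing the defining relations of the graph monoid. -/
inductive FlowRel (hrf : G.RowFinite) : (V →₀ ℕ) → (V →₀ ℕ) → Prop
  | of {a b : V →₀ ℕ} : G.gmRel hrf a b → FlowRel hrf a b
  | refl (a : V →₀ ℕ) : FlowRel hrf a a
  | trans {a b c : V →₀ ℕ} : FlowRel hrf a b → FlowRel hrf b c → FlowRel hrf a c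
  | add_right {a b : V →₀ ℕ} (c : V →₀ ℕ) : FlowRel hrf a b → FlowRel hrf (a + c) (b + c)

/-- The quotient of the talented monoid by a ℤ-order ideal. -/
noncomputable def TalQuot (hrf : G.RowFinite) (I : Set (G.Tal hrf))
    (hI : G.IsZOrderIdeal hrf I) : Type :=
  (idealCon I hI.1.zero_mem (fun ha hb => hI.1.add_mem ha hb)).Quotient

noncomputable instance (hrf : G.RowFinite) (I : Set (G.Tal hrf))
    (hI : G.IsZOrderIdeal hrf I) : AddCommMonoid (G.TalQuot hrf I hI) :=
  inferInstanceAs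
    (AddCommMonoid (idealCon I hI.1.zero_mem (fun ha hb => hI.1.add_mem ha hb)).Quotient)

/-- The ℤ-action descends to the quotient of the talented monoid by a ℤ-order ideal. -/
noncomputable def qshift (hrf : G.RowFinite) (I : Set (G.Tal hrf))
    (hI : G.IsZOrderIdeal hrf I) (n : ℤ) : G.TalQuot hrf I hI →+ G.TalQuot hrf I hI :=
  AddCon.lift _
    ((AddCon.mk' (idealCon I hI.1.zero_mem (fun ha hb => hI.1.add_mem ha hb))).comp
      (G.shift hrf n))
    (by
      rintro a b ⟨c, hc, d, hd, h⟩
      refine (AddCon.ker_rel _).mpr ?_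
      show (AddCon.mk' _) (G.shift hrf n a) = (AddCon.mk' _) (G.shift hrf n b)
      refine (AddCon.eq _).mpr ?_
      exact ⟨G.shift hrf n c, hI.2 n c hc, G.shift hrf n d, hI.2 n d hd, by
        rw [← map_add, ← map_add, h]⟩)

end DGraph

namespace Stmt14Aux

open DGraph Finsupp

variable {V Ed : Type} {G : DGraph V Ed}

/-- Walks as lists of edges. -/
inductive Walk (G : DGraph V Ed) : V → List Ed → V → Prop
  | nil (u : V) : Walk G u [] u
  | cons {u w : V} (e : Ed) {es : List Ed} :
      G.s e = u → Walk G (G.r e) es w → Walk G u (e :: es) w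

theorem Walk.append {u x w : V} {l l' : List Ed}
    (h : Walk G u l x) (h' : Walk G x l' w) : Walk G u (l ++ l') w := by
  induction h with
  | nil => simpa
  | cons e hs _ ih => exact Walk.cons e hs (ih h')

theorem flowsTo_iff_walk {u w : V} : G.FlowsTo u w ↔ ∃ l, Walk G u l w := by
  constructor
  · intro h
    induction h with
    | refl => exact ⟨[], Walk.nil u⟩
    | tail _ hstep ih =>
      obtain ⟨l, hl⟩ := ih
      obtain ⟨e, he1, he2⟩ := hstep
      exact ⟨l ++ [e], hl.append (Walk.cons e he1 (he2 ▸ Walk.nil _))⟩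
  · rintro ⟨l, hl⟩
    induction hl with
    | nil => exact Relation.ReflTransGen.refl
    | cons e hs _ ih => exact Relation.ReflTransGen.head ⟨e, hs, rfl⟩ ih

theorem Walk.head_src {u w : V} {l : List Ed} (h : Walk G u l w) (hne : l ≠ []) :
    G.s (l.head hne) = u := by
  cases h with
  | nil => exact absurd rfl hne
  | cons e hs _ => exact hs

theorem Walk.last_tgt {u w : V} {l : List Ed} (h : Walk G u l w) (hne : l ≠ []) :
    G.r (l.getLast hne) = w := by
  induction h with
  | nil => exact absurd rfl hne
  | cons e hs htail ih =>
    rename_i u' w' es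
    cases es with
    | nil => cases htail; simp
    | cons f fs =>
      rw [List.getLast_cons (by simp)]
      exact ih (by simp)

theorem Walk.chain' {u w : V} {l : List Ed} (h : Walk G u l w) :
    l.Chain' (fun e f => G.r e = G.s f) := by
  induction h with
  | nil => exact List.isChain_nil
  | cons e hs htail ih =>
    rename_i u' w' es
    refine List.isChain_cons.mpr ⟨?_, ih⟩
    intro f hf
    cases es with
    | nil => simp at hf
    | cons g gs =>
      simp at hf
      subst hf
      cases htail with
      | cons _ hgs _ => exact hgs.symm

variable {v : V} (hv : G.LinePoint v)

include hv

theorem walk_det : ∀ {u w : V} {l : List Ed}, Walk G u l w →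
    ∀ {w' : V} {l' : List Ed}, G.FlowsTo v u → Walk G u l' w' → l.length ≤ l'.length →
    ∃ rest, l' = l ++ rest ∧ Walk G w rest w' := by
  intro u w l h
  induction h with
  | nil => exact fun _ h' _ => ⟨_, rfl, h'⟩
  | cons e hs htail ih =>
    intro w' l' hu h' hle
    cases h' with
    | nil => simp at hle
    | cons f hf htail' =>
      have hef : f = e := (hv _ hu).1 f e hf hs
      rw [hef] at htail'
      obtain ⟨rest, hr1, hr2⟩ := ih (hu.tail ⟨e, hs, rfl⟩) htail' (by simpa using hle)
      exact ⟨rest, by simp [hr1, hef], hr2⟩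

theorem no_closed {w : V} {l : List Ed} (hw : G.FlowsTo v w)
    (h : Walk G w l w) (hne : l ≠ []) : False := by
  refine (hv w hw).2 ⟨⟨l, hne, h.chain'⟩, ?_, ?_⟩
  · exact h.head_src hne
  · exact h.last_tgt hne

theorem walk_len_unique {w : V} {l l' : List Ed}
    (h : Walk G v l w) (h' : Walk G v l' w) : l.length = l'.length := by
  have hvv : G.FlowsTo v v := Relation.ReflTransGen.refl
  have hw : G.FlowsTo v w := flowsTo_iff_walk.mpr ⟨l, h⟩
  rcases le_total l.length l'.length with hle | hle
  · obtain ⟨rest, hr1, hr2⟩ := walk_det hv h hvv h' hle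
    cases rest with
    | nil => simp [hr1]
    | cons a as => exact (no_closed hv hw hr2 (by simp)).elim
  · obtain ⟨rest, hr1, hr2⟩ := walk_det hv h' hvv h hle
    cases rest with
    | nil => simp [hr1]
    | cons a as => exact (no_closed hv hw hr2 (by simp)).elim

omit hv

open Classical in
noncomputable def mlen (v w : V) : ℕ :=
  if h : ∃ l, Walk G v l w then h.choose.length else 0

include hv

theorem mlen_eq {w : V} {l : List Ed} (h : Walk G v l w) : mlen (G := G) v w = l.length := by
  rw [mlen, dif_pos ⟨l, h⟩]
  exact walk_len_unique hv (⟨l, h⟩ : ∃ l, Walk G v l w).choose_spec h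


omit hv

/-- Translation by `i`, on `WithTop (ℤ →₀ ℕ)`. -/
noncomputable def Tsh (i : ℤ) : WithTop (ℤ →₀ ℕ) →+ WithTop (ℤ →₀ ℕ) where
  toFun := WithTop.map (Finsupp.mapDomain (· + i))
  map_zero' := by
    show WithTop.map _ ((0 : ℤ →₀ ℕ) : WithTop (ℤ →₀ ℕ)) = _
    rw [WithTop.map_coe, Finsupp.mapDomain_zero]; rfl
  map_add' := by
    intro x y
    show WithTop.map (Finsupp.mapDomain (· + i)) (x + y) =
      WithTop.map (Finsupp.mapDomain (· + i)) x + WithTop.map (Finsupp.mapDomain (· + i)) y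
    cases x with
    | top => rw [WithTop.top_add, WithTop.map_top, WithTop.top_add]
    | coe a =>
      cases y with
      | top => rw [WithTop.add_top, WithTop.map_top, WithTop.add_top]
      | coe b =>
        rw [← WithTop.coe_add, WithTop.map_coe, WithTop.map_coe, WithTop.map_coe,
          ← WithTop.coe_add, Finsupp.mapDomain_add]

theorem Tsh_coe (i : ℤ) (a : ℤ →₀ ℕ) :
    Tsh i (a : WithTop (ℤ →₀ ℕ)) = ↑(Finsupp.mapDomain (· + i) a) := WithTop.map_coe _ a

theorem Tsh_top (i : ℤ) : Tsh i (⊤ : WithTop (ℤ →₀ ℕ)) = ⊤ := rfl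

theorem Tsh_eq_top_iff {i : ℤ} {x : WithTop (ℤ →₀ ℕ)} : Tsh i x = ⊤ ↔ x = ⊤ := by
  cases x with
  | top => simp [Tsh_top]
  | coe a => simp [Tsh_coe]

theorem Tsh_Tsh (i : ℤ) (x : WithTop (ℤ →₀ ℕ)) : Tsh i (Tsh 1 x) = Tsh (i + 1) x := by
  cases x with
  | top => rfl
  | coe a =>
    rw [Tsh_coe, Tsh_coe, Tsh_coe, ← Finsupp.mapDomain_comp]
    congr 1
    refine Finsupp.mapDomain_congr fun j _ => by dsimp; ring

theorem sum_eq_top {ι : Type} {s : Finset ι} {f : ι → WithTop (ℤ →₀ ℕ)}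
    {e : ι} (he : e ∈ s) (h : f e = ⊤) : ∑ x ∈ s, f x = ⊤ := by
  classical
  rw [← Finset.add_sum_erase s f he, h, WithTop.top_add]

theorem term_ne_top {ι : Type} {s : Finset ι} {f : ι → WithTop (ℤ →₀ ℕ)}
    (h : ∑ x ∈ s, f x ≠ ⊤) {e : ι} (he : e ∈ s) : f e ≠ ⊤ :=
  fun ht => h (sum_eq_top he ht)

theorem nsmul_top {n : ℕ} (hn : n ≠ 0) : n • (⊤ : WithTop (ℤ →₀ ℕ)) = ⊤ := by
  obtain ⟨m, rfl⟩ := Nat.exists_eq_succ_of_ne_zero hn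
  rw [succ_nsmul, WithTop.add_top]

section GVal

variable (G)
variable (hrf : G.RowFinite) (v : V)

open Classical in
/-- Approximants to the value function. -/
noncomputable def gval : ℕ → V → WithTop (ℤ →₀ ℕ)
  | 0, w => if G.FlowsTo v w then ((Finsupp.single (-(mlen (G := G) v w : ℤ)) 1 : ℤ →₀ ℕ) : WithTop (ℤ →₀ ℕ)) else ⊤
  | n + 1, w =>
    if G.FlowsTo v w then ((Finsupp.single (-(mlen (G := G) v w : ℤ)) 1 : ℤ →₀ ℕ) : WithTop (ℤ →₀ ℕ))
    else if G.IsSink w then ⊤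
    else ∑ e ∈ (hrf w).toFinset, Tsh 1 (gval n (G.r e))

open Classical in
theorem gval_succ (n : ℕ) (w : V) :
    gval G hrf v (n + 1) w =
      if G.FlowsTo v w then ((Finsupp.single (-(mlen (G := G) v w : ℤ)) 1 : ℤ →₀ ℕ) : WithTop (ℤ →₀ ℕ))
      else if G.IsSink w then ⊤
      else ∑ e ∈ (hrf w).toFinset, Tsh 1 (gval G hrf v n (G.r e)) := rfl

open Classical in
theorem gval_zero (w : V) :
    gval G hrf v 0 w =
      if G.FlowsTo v w then ((Finsupp.single (-(mlen (G := G) v w : ℤ)) 1 : ℤ →₀ ℕ) : WithTop (ℤ →₀ ℕ))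
      else ⊤ := rfl

theorem gval_step (n : ℕ) (w : V) (h : gval G hrf v n w ≠ ⊤) :
    gval G hrf v (n + 1) w = gval G hrf v n w := by
  classical
  induction n generalizing w with
  | zero =>
    by_cases hf : G.FlowsTo v w
    · rw [gval_succ, gval_zero, if_pos hf, if_pos hf]
    · rw [gval_zero, if_neg hf] at h; exact absurd rfl h
  | succ n ih =>
    by_cases hf : G.FlowsTo v w
    · rw [gval_succ, gval_succ, if_pos hf, if_pos hf]
    · by_cases hs : G.IsSink w
      · rw [gval_succ, if_neg hf, if_pos hs] at h; exact absurd rfl h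
      · rw [gval_succ, if_neg hf, if_neg hs] at h ⊢
        rw [gval_succ, if_neg hf, if_neg hs]
        refine Finset.sum_congr rfl fun e he => ?_
        have : gval G hrf v n (G.r e) ≠ ⊤ := by
          intro ht
          exact term_ne_top h he (Tsh_eq_top_iff.mpr ht)
        rw [ih _ this]

theorem gval_stable {n k : ℕ} (hnk : n ≤ k) {w : V} (h : gval G hrf v n w ≠ ⊤) :
    gval G hrf v k w = gval G hrf v n w := by
  obtain ⟨m, rfl⟩ := Nat.exists_eq_add_of_le hnk
  induction m with
  | zero => rfl
  | succ m ih =>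
    have ihm := ih (Nat.le_add_right n m)
    rw [← Nat.add_assoc, gval_step _ _ _ _ _ (ihm ▸ h), ihm]

open Classical in
/-- The value function `V → WithTop (ℤ →₀ ℕ)`. -/
noncomputable def val (w : V) : WithTop (ℤ →₀ ℕ) :=
  if h : ∃ n, gval G hrf v n w ≠ ⊤ then gval G hrf v h.choose w else ⊤

theorem val_eq {n : ℕ} {w : V} (h : gval G hrf v n w ≠ ⊤) :
    val G hrf v w = gval G hrf v n w := by
  classical
  rw [val, dif_pos ⟨n, h⟩]
  set n₀ := (⟨n, h⟩ : ∃ n, gval G hrf v n w ≠ ⊤).choose with hn₀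
  have h₀ : gval G hrf v n₀ w ≠ ⊤ := (⟨n, h⟩ : ∃ n, gval G hrf v n w ≠ ⊤).choose_spec
  rcases le_total n₀ n with hle | hle
  · rw [gval_stable G hrf v hle h₀]
  · rw [gval_stable G hrf v hle h]

theorem val_eq_top {w : V} (h : ¬ ∃ n, gval G hrf v n w ≠ ⊤) : val G hrf v w = ⊤ := by
  rw [val, dif_neg h]

end GVal


section Rel

variable (hrf : G.RowFinite)

theorem sum_ne_top' {ι : Type} {s : Finset ι} {f : ι → WithTop (ℤ →₀ ℕ)}
    (h : ∀ i ∈ s, f i ≠ ⊤) : ∑ x ∈ s, f x ≠ ⊤ := by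
  classical
  induction s using Finset.induction with
  | empty => simp
  | insert a s' hnm ih =>
    rw [Finset.sum_insert hnm, WithTop.add_ne_top]
    exact ⟨h _ (Finset.mem_insert_self a s'), ih fun i hi => h i (Finset.mem_insert_of_mem hi)⟩

theorem not_sink_exists {w : V} (hs : ¬ G.IsSink w) : ∃ e, G.s e = w := by
  rw [DGraph.IsSink] at hs; push_neg at hs
  exact hs

include hv

theorem src_singleton {w : V} (hf : G.FlowsTo v w) {e₀ : Ed} (he₀ : G.s e₀ = w) :
    (hrf w).toFinset = {e₀} := by
  ext e
  simp only [Set.Finite.mem_toFinset, Set.mem_setOf_eq, Finset.mem_singleton]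
  exact ⟨fun he => (hv w hf).1 e e₀ he he₀, fun h => h ▸ he₀⟩

theorem mlen_succ {w : V} (hf : G.FlowsTo v w) {e : Ed} (he : G.s e = w) :
    mlen (G := G) v (G.r e) = mlen (G := G) v w + 1 := by
  obtain ⟨l, hl⟩ := flowsTo_iff_walk.mp hf
  have hl' : Walk G v (l ++ [e]) (G.r e) := hl.append (Walk.cons e he (Walk.nil _))
  rw [mlen_eq hv hl, mlen_eq hv hl', List.length_append, List.length_singleton]

omit hv in
theorem val_line {w : V} (hf : G.FlowsTo v w) :
    val G hrf v w = ((Finsupp.single (-(mlen (G := G) v w : ℤ)) 1 : ℤ →₀ ℕ) : WithTop (ℤ →₀ ℕ)) := by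
  have h0 : gval G hrf v 0 w ≠ ⊤ := by
    rw [gval_zero, if_pos hf]; exact WithTop.coe_ne_top
  rw [val_eq G hrf v h0, gval_zero, if_pos hf]

theorem val_rel {w : V} (hs : ¬ G.IsSink w) :
    val G hrf v w = ∑ e ∈ (hrf w).toFinset, Tsh 1 (val G hrf v (G.r e)) := by
  classical
  by_cases hf : G.FlowsTo v w
  · obtain ⟨e₀, he₀⟩ := not_sink_exists hs
    rw [src_singleton hv hrf hf he₀, Finset.sum_singleton]
    have hfr : G.FlowsTo v (G.r e₀) := hf.tail ⟨e₀, he₀, rfl⟩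
    rw [val_line hrf hf, val_line hrf hfr, Tsh_coe, Finsupp.mapDomain_single,
      mlen_succ hv hf he₀]
    congr 2
    push_cast
    ring
  · by_cases hg : ∃ n, gval G hrf v n w ≠ ⊤
    · obtain ⟨n, hn⟩ := hg
      match n with
      | 0 => rw [gval_zero, if_neg hf] at hn; exact absurd rfl hn
      | n + 1 =>
        have hn' := hn
        rw [gval_succ, if_neg hf, if_neg hs] at hn'
        rw [val_eq G hrf v hn, gval_succ, if_neg hf, if_neg hs]
        refine Finset.sum_congr rfl fun e he => ?_
        have hne : gval G hrf v n (G.r e) ≠ ⊤ := fun ht =>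
          term_ne_top hn' he (Tsh_eq_top_iff.mpr ht)
        rw [val_eq G hrf v hne]
    · rw [val_eq_top G hrf v hg]
      have : ∃ e ∈ (hrf w).toFinset, val G hrf v (G.r e) = ⊤ := by
        by_contra hall
        push_neg at hall
        have hgood : ∀ e ∈ (hrf w).toFinset, ∃ n, gval G hrf v n (G.r e) ≠ ⊤ := by
          intro e he
          by_contra hno
          exact hall e he (val_eq_top G hrf v hno)
        set ns : Ed → ℕ := fun e =>
          if h : ∃ n, gval G hrf v n (G.r e) ≠ ⊤ then h.choose else 0 with hns
        set N := (hrf w).toFinset.sup ns with hN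
        have hfin : ∀ e ∈ (hrf w).toFinset, gval G hrf v N (G.r e) ≠ ⊤ := by
          intro e he
          have hge := hgood e he
          have hnse : ns e = hge.choose := by rw [hns]; exact dif_pos hge
          have hle : hge.choose ≤ N := by rw [← hnse]; exact Finset.le_sup he
          rw [gval_stable G hrf v hle hge.choose_spec]
          exact hge.choose_spec
        apply hg
        refine ⟨N + 1, ?_⟩
        rw [gval_succ, if_neg hf, if_neg hs]
        exact sum_ne_top' fun e he => fun ht => hfin e he (Tsh_eq_top_iff.mp ht)
      obtain ⟨e, he, hte⟩ := this
      symm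
      exact sum_eq_top he (by rw [hte]; rfl)

end Rel


section TalSide

variable (hrf : G.RowFinite)

noncomputable def phi (v : V) : (ℤ →₀ ℕ) →+ G.Tal hrf :=
  (AddCon.mk' (G.talCon hrf)).comp
    (Finsupp.mapDomain.addMonoidHom (fun j : ℤ => ((v, j) : V × ℤ)))

theorem phi_single (v : V) (j : ℤ) (a : ℕ) :
    phi hrf v (Finsupp.single j a) = (G.talCon hrf).mk' (Finsupp.single ((v, j) : V × ℤ) a) := by
  show (AddCon.mk' (G.talCon hrf))
    (Finsupp.mapDomain (fun j : ℤ => ((v, j) : V × ℤ)) (Finsupp.single j a)) = _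
  rw [Finsupp.mapDomain_single]

theorem gen_eq (v : V) (j : ℤ) : G.gen hrf v j = phi hrf v (Finsupp.single j 1) :=
  (phi_single hrf v j 1).symm

theorem gen_rel {w : V} (hs : ¬ G.IsSink w) (i : ℤ) :
    G.gen hrf w i = ∑ e ∈ (hrf w).toFinset, G.gen hrf (G.r e) (i + 1) := by
  show (G.talCon hrf).mk' (Finsupp.single ((w, i) : V × ℤ) 1) =
    ∑ e ∈ (hrf w).toFinset, (G.talCon hrf).mk' (Finsupp.single ((G.r e, i + 1) : V × ℤ) 1)
  rw [← map_sum]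
  exact (AddCon.eq _).mpr (AddConGen.Rel.of _ _ ⟨w, i, hs, rfl, rfl⟩)

noncomputable def theta0 (v : V) : ((V × ℤ) →₀ ℕ) →+ WithTop (ℤ →₀ ℕ) :=
  Finsupp.liftAddHom fun p =>
    (smulAddHom ℕ (WithTop (ℤ →₀ ℕ))).flip (Tsh p.2 (val G hrf v p.1))

theorem theta0_single (v : V) (p : V × ℤ) (a : ℕ) :
    theta0 hrf v (Finsupp.single p a) = a • Tsh p.2 (val G hrf v p.1) := by
  rw [theta0, Finsupp.liftAddHom_apply_single]
  rfl

theorem theta0_apply (v : V) (f : (V × ℤ) →₀ ℕ) :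
    theta0 hrf v f = ∑ p ∈ f.support, f p • Tsh p.2 (val G hrf v p.1) := by
  rw [theta0, Finsupp.liftAddHom_apply]
  rfl

theorem mk_eq_sum (f : (V × ℤ) →₀ ℕ) :
    (G.talCon hrf).mk' f = ∑ p ∈ f.support, f p • G.gen hrf p.1 p.2 := by
  conv_lhs => rw [← Finsupp.sum_single f]
  rw [map_finsuppSum]
  refine Finset.sum_congr rfl fun p hp => ?_
  show (G.talCon hrf).mk' (Finsupp.single p (f p)) = f p • G.gen hrf p.1 p.2
  have h1 : Finsupp.single p (f p) = f p • Finsupp.single p 1 := by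
    rw [Finsupp.smul_single, smul_eq_mul, mul_one]
  rw [h1, map_nsmul]
  rfl

theorem phi_shift (v : V) (n : ℤ) (k : ℤ →₀ ℕ) :
    phi hrf v (Finsupp.mapDomain (fun j => j + n) k) = G.shift hrf n (phi hrf v k) := by
  have : (phi hrf v).comp (Finsupp.mapDomain.addMonoidHom (fun j : ℤ => j + n)) =
      (G.shift hrf n).comp (phi hrf v) := by
    refine Finsupp.addHom_ext fun j a => ?_
    show phi hrf v (Finsupp.mapDomain (fun j : ℤ => j + n) (Finsupp.single j a)) =
      G.shift hrf n (phi hrf v (Finsupp.single j a))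
    rw [Finsupp.mapDomain_single, phi_single, phi_single]
    show _ = (AddCon.mk' (G.talCon hrf))
      (Finsupp.mapDomain (fun p : V × ℤ => (p.1, p.2 + n)) (Finsupp.single ((v, j) : V × ℤ) a))
    rw [Finsupp.mapDomain_single]
  exact DFunLike.congr_fun this k

theorem gen_shift (v : V) (j : ℤ) : G.gen hrf v j = G.shift hrf j (G.gen hrf v 0) := by
  show _ = (AddCon.mk' (G.talCon hrf))
    (Finsupp.mapDomain (fun p : V × ℤ => (p.1, p.2 + j)) (Finsupp.single ((v, 0) : V × ℤ) 1))
  rw [Finsupp.mapDomain_single]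
  show (G.talCon hrf).mk' (Finsupp.single ((v, j) : V × ℤ) 1) = _
  norm_num

noncomputable def coeHom : (ℤ →₀ ℕ) →+ WithTop (ℤ →₀ ℕ) where
  toFun := (↑)
  map_zero' := rfl
  map_add' := WithTop.coe_add

variable (hlp : G.LinePoint v)

include hlp

noncomputable def thetaBar : G.Tal hrf →+ WithTop (ℤ →₀ ℕ) :=
  AddCon.lift _ (theta0 hrf v) (by
    apply AddCon.addConGen_le.mpr
    rintro a b ⟨w, i, hw, rfl, rfl⟩
    refine (AddCon.ker_rel _).mpr ?_
    calc theta0 hrf v (Finsupp.single ((w, i) : V × ℤ) 1)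
        = Tsh i (val G hrf v w) := by rw [theta0_single, one_smul]
      _ = Tsh i (∑ e ∈ (hrf w).toFinset, Tsh 1 (val G hrf v (G.r e))) := by
          rw [val_rel hlp hrf hw]
      _ = ∑ e ∈ (hrf w).toFinset, Tsh i (Tsh 1 (val G hrf v (G.r e))) := map_sum _ _ _
      _ = ∑ e ∈ (hrf w).toFinset, Tsh (i + 1) (val G hrf v (G.r e)) :=
          Finset.sum_congr rfl fun e _ => Tsh_Tsh i _
      _ = theta0 hrf v (∑ e ∈ (hrf w).toFinset, Finsupp.single ((G.r e, i + 1) : V × ℤ) 1) := by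
          rw [map_sum]
          exact (Finset.sum_congr rfl fun e _ => by rw [theta0_single, one_smul]).symm)

theorem thetaBar_mk (f : (V × ℤ) →₀ ℕ) :
    thetaBar hrf hlp ((G.talCon hrf).mk' f) = theta0 hrf v f := rfl

theorem val_self : val G hrf v v = ((Finsupp.single (0 : ℤ) 1 : ℤ →₀ ℕ) : WithTop (ℤ →₀ ℕ)) := by
  rw [val_line hrf (Relation.ReflTransGen.refl)]
  have : mlen (G := G) v v = 0 := mlen_eq hlp (Walk.nil v)
  rw [this]
  norm_num

theorem theta_phi (k : ℤ →₀ ℕ) : thetaBar hrf hlp (phi hrf v k) = (k : WithTop (ℤ →₀ ℕ)) := by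
  have hh : (thetaBar hrf hlp).comp (phi hrf v) = coeHom := by
    refine Finsupp.addHom_ext fun j a => ?_
    show thetaBar hrf hlp (phi hrf v (Finsupp.single j a)) = coeHom (Finsupp.single j a)
    rw [phi_single, thetaBar_mk, theta0_single, val_self hrf hlp, Tsh_coe,
      Finsupp.mapDomain_single, zero_add]
    have h1 : Finsupp.single j a = a • Finsupp.single j 1 := by
      rw [Finsupp.smul_single, smul_eq_mul, mul_one]
    show _ = coeHom (Finsupp.single j a)
    rw [h1, map_nsmul]
    rfl
  exact DFunLike.congr_fun hh k

theorem phi_inj : Function.Injective (phi hrf v) := by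
  intro k k' h
  have := theta_phi hrf hlp k
  rw [h, theta_phi hrf hlp k'] at this
  exact WithTop.coe_injective this.symm

theorem walk_gen : ∀ {u w : V} {l : List Ed}, Walk G u l w → G.FlowsTo v u →
    ∀ i : ℤ, G.gen hrf u i = G.gen hrf w (i + l.length) := by
  intro u w l hw
  induction hw with
  | nil => intro _ i; simp
  | cons e hs htail ih =>
    intro hu i
    rename_i u' w' es
    have hsk : ¬ G.IsSink u' := fun h => h e hs
    rw [gen_rel hrf hsk i, src_singleton hlp hrf hu hs, Finset.sum_singleton,
      ih (hu.tail ⟨e, hs, rfl⟩) (i + 1)]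
    congr 1
    simp only [List.length_cons]
    push_cast
    ring

theorem line_gen {w : V} (hf : G.FlowsTo v w) (i : ℤ) :
    G.gen hrf w i =
      phi hrf v (Finsupp.mapDomain (· + i)
        (Finsupp.single (-(mlen (G := G) v w : ℤ)) 1)) := by
  obtain ⟨l, hl⟩ := flowsTo_iff_walk.mp hf
  have hm : mlen (G := G) v w = l.length := mlen_eq hlp hl
  rw [Finsupp.mapDomain_single, ← gen_eq]
  have hwg := walk_gen hrf hlp hl (Relation.ReflTransGen.refl)
    (-(mlen (G := G) v w : ℤ) + i)
  rw [hwg]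
  congr 1
  rw [hm]
  ring

theorem good_gen : ∀ n : ℕ, ∀ w : V, ∀ c : ℤ →₀ ℕ,
    gval G hrf v n w = (c : WithTop (ℤ →₀ ℕ)) → ∀ i : ℤ,
    G.gen hrf w i = phi hrf v (Finsupp.mapDomain (· + i) c) := by
  intro n
  induction n with
  | zero =>
    intro w c hc i
    by_cases hf : G.FlowsTo v w
    · rw [gval_zero, if_pos hf] at hc
      obtain rfl : (Finsupp.single (-(mlen (G := G) v w : ℤ)) 1 : ℤ →₀ ℕ) = c :=
        WithTop.coe_injective hc
      exact line_gen hrf hlp hf i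
    · rw [gval_zero, if_neg hf] at hc
      exact absurd hc.symm WithTop.coe_ne_top
  | succ n ih =>
    intro w c hc i
    by_cases hf : G.FlowsTo v w
    · rw [gval_succ, if_pos hf] at hc
      obtain rfl : (Finsupp.single (-(mlen (G := G) v w : ℤ)) 1 : ℤ →₀ ℕ) = c :=
        WithTop.coe_injective hc
      exact line_gen hrf hlp hf i
    · by_cases hs : G.IsSink w
      · rw [gval_succ, if_neg hf, if_pos hs] at hc
        exact absurd hc.symm WithTop.coe_ne_top
      · classical
        rw [gval_succ, if_neg hf, if_neg hs] at hc
        set ce : Ed → (ℤ →₀ ℕ) := fun e =>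
          if h : ∃ d : ℤ →₀ ℕ, gval G hrf v n (G.r e) = ↑d then h.choose else 0 with hcedef
        have hce : ∀ e ∈ (hrf w).toFinset, gval G hrf v n (G.r e) = ↑(ce e) := by
          intro e he
          have hne : gval G hrf v n (G.r e) ≠ ⊤ := by
            intro ht
            have : (⊤ : WithTop (ℤ →₀ ℕ)) = ↑c := by
              rw [← hc]
              exact (sum_eq_top he (Tsh_eq_top_iff.mpr ht)).symm
            exact WithTop.coe_ne_top this.symm
          obtain ⟨d, hd⟩ := Option.ne_none_iff_exists'.mp hne
          have hex : ∃ d : ℤ →₀ ℕ, gval G hrf v n (G.r e) = ↑d := ⟨d, hd⟩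
          have : ce e = hex.choose := by rw [hcedef]; exact dif_pos hex
          rw [this]
          exact hex.choose_spec
        have hcs : c = ∑ e ∈ (hrf w).toFinset, Finsupp.mapDomain (· + (1 : ℤ)) (ce e) := by
          apply WithTop.coe_injective
          rw [← hc, WithTop.coe_sum]
          refine Finset.sum_congr rfl fun e he => ?_
          rw [hce e he, Tsh_coe]
        rw [gen_rel hrf hs i,
          Finset.sum_congr rfl fun e he => ih (G.r e) (ce e) (hce e he) (i + 1),
          ← map_sum (phi hrf v)]
        congr 1
        rw [hcs, Finsupp.mapDomain_finset_sum]
        refine Finset.sum_congr rfl fun e he => ?_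
        rw [← Finsupp.mapDomain_comp]
        refine Finsupp.mapDomain_congr fun j _ => ?_
        dsimp
        ring

theorem good_gen' {w : V} {c : ℤ →₀ ℕ} (h : val G hrf v w = (c : WithTop (ℤ →₀ ℕ)))
    (i : ℤ) : G.gen hrf w i = phi hrf v (Finsupp.mapDomain (· + i) c) := by
  have hex : ∃ n, gval G hrf v n w ≠ ⊤ := by
    by_contra hno
    rw [val_eq_top G hrf v hno] at h
    exact WithTop.coe_ne_top h.symm
  have hlpal := val_eq G hrf v hex.choose_spec
  rw [hlpal] at h
  exact good_gen hrf hlp hex.choose w c h i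

omit hlp

theorem phi_single_smul (v : V) (j : ℤ) (b : ℕ) :
    phi hrf v (Finsupp.single j b) = b • G.gen hrf v j := by
  have h1 : Finsupp.single j b = b • Finsupp.single j 1 := by
    rw [Finsupp.smul_single, smul_eq_mul, mul_one]
  rw [h1, map_nsmul, ← gen_eq]

theorem phi_sum (v : V) (k : ℤ →₀ ℕ) :
    phi hrf v k = k.sum fun j a => a • G.gen hrf v j := by
  conv_lhs => rw [← Finsupp.sum_single k]
  rw [map_finsuppSum]
  exact Finsupp.sum_congr fun j _ => phi_single_smul hrf v j (k j)

theorem nsmul_mem {I : Set (G.Tal hrf)} (hI : IsOrderIdeal I) {x : G.Tal hrf}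
    (hx : x ∈ I) (b : ℕ) : b • x ∈ I := by
  induction b with
  | zero => rw [zero_smul]; exact hI.zero_mem
  | succ b ih => rw [succ_nsmul]; exact hI.add_mem ih hx

theorem mem_ideal (v : V) {I : Set (G.Tal hrf)} (hI : G.IsZOrderIdeal hrf I)
    (h0 : G.gen hrf v 0 ∈ I) (k : ℤ →₀ ℕ) : phi hrf v k ∈ I := by
  induction k using Finsupp.induction with
  | zero => rw [map_zero]; exact hI.1.zero_mem
  | single_add j b f hjf hb ih =>
    rw [map_add]
    refine hI.1.add_mem ?_ ih
    rw [phi_single_smul]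
    exact nsmul_mem hrf hI.1 (gen_shift hrf v j ▸ hI.2 j _ h0) b

include hlp

theorem range_ord {a b : G.Tal hrf} (hb : b ∈ Set.range (phi hrf v))
    (hle : MLe a b) : a ∈ Set.range (phi hrf v) := by
  classical
  obtain ⟨k, rfl⟩ := hb
  obtain ⟨c, hac⟩ := hle
  obtain ⟨f, rfl⟩ := AddCon.mk'_surjective a
  have htb : thetaBar hrf hlp ((G.talCon hrf).mk' f) ≠ ⊤ := by
    intro ht
    have h2 := congrArg (thetaBar hrf hlp) hac
    erw [map_add] at h2
    rw [ht, WithTop.top_add, theta_phi hrf hlp] at h2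
    exact WithTop.coe_ne_top h2.symm
  have hvals : ∀ p ∈ f.support, val G hrf v p.1 ≠ ⊤ := by
    intro p hp hvt
    apply htb
    rw [thetaBar_mk hrf hlp, theta0_apply]
    refine sum_eq_top hp ?_
    rw [hvt]
    rw [show Tsh p.2 (⊤ : WithTop (ℤ →₀ ℕ)) = ⊤ from rfl]
    exact nsmul_top (Finsupp.mem_support_iff.mp hp)
  set cp : (V × ℤ) → (ℤ →₀ ℕ) := fun p =>
    if h : ∃ d : ℤ →₀ ℕ, val G hrf v p.1 = ↑d then h.choose else 0 with hcp
  have hcpe : ∀ p ∈ f.support, val G hrf v p.1 = ↑(cp p) := by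
    intro p hp
    obtain ⟨d, hd⟩ := Option.ne_none_iff_exists'.mp (hvals p hp)
    have hex : ∃ d : ℤ →₀ ℕ, val G hrf v p.1 = ↑d := ⟨d, hd⟩
    have : cp p = hex.choose := by rw [hcp]; exact dif_pos hex
    rw [this]
    exact hex.choose_spec
  refine ⟨∑ p ∈ f.support, f p • Finsupp.mapDomain (· + p.2) (cp p), ?_⟩
  rw [map_sum, mk_eq_sum]
  refine Finset.sum_congr rfl fun p hp => ?_
  rw [map_nsmul, good_gen' hrf hlp (hcpe p hp) p.2]

theorem range_eq : Set.range (phi hrf v) = G.zIdealGen hrf {G.gen hrf v 0} := by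
  apply subset_antisymm
  · rintro x ⟨k, rfl⟩
    intro I hI
    exact mem_ideal hrf v hI.1 (hI.2 rfl) k
  · intro x hx
    refine hx (Set.range (phi hrf v)) ⟨⟨?_, ?_⟩, ?_⟩
    · exact ⟨⟨0, map_zero _⟩,
        fun ha hb => by
          obtain ⟨k, rfl⟩ := ha; obtain ⟨k', rfl⟩ := hb
          exact ⟨k + k', map_add _ _ _⟩,
        fun hb hle => range_ord hrf hlp hb hle⟩
    · rintro n x ⟨k, rfl⟩
      exact ⟨Finsupp.mapDomain (· + n) k, phi_shift hrf v n k⟩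
    · intro y hy
      rw [Set.mem_singleton_iff] at hy
      exact ⟨Finsupp.single 0 1, by rw [← gen_eq, hy]⟩

end TalSide

end Stmt14Aux


/-- If `v` is a line point of a row-finite graph `E`, then the ℤ-order
ideal `⟨v⟩` of `T_E` is ℤ-monoid isomorphic to `⊕_{j ∈ ℤ} ℕ` with ℤ acting by right
shifts, and every `x ∈ ⟨v⟩` has a unique representation `x = Σ_j k_j v(j)`. -/
theorem statement14 {V Ed : Type} (G : DGraph V Ed) (hrf : G.RowFinite)
    (v : V) (hv : G.LinePoint v) :
    (∃ φ : (ℤ →₀ ℕ) →+ G.Tal hrf,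
      Function.Injective φ ∧
      Set.range φ = G.zIdealGen hrf {G.gen hrf v 0} ∧
      ∀ (n : ℤ) (k : ℤ →₀ ℕ),
        φ (Finsupp.mapDomain (fun j => j + n) k) = G.shift hrf n (φ k)) ∧
    ∀ x ∈ G.zIdealGen hrf {G.gen hrf v 0},
      ∃! k : ℤ →₀ ℕ, x = k.sum fun j a => a • G.gen hrf v j := by
  constructor
  · exact ⟨Stmt14Aux.phi hrf v, Stmt14Aux.phi_inj hrf hv, Stmt14Aux.range_eq hrf hv,
      fun n k => Stmt14Aux.phi_shift hrf v n k⟩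
  · intro x hx
    rw [← Stmt14Aux.range_eq hrf hv] at hx
    obtain ⟨k, rfl⟩ := hx
    refine ⟨k, Stmt14Aux.phi_sum hrf v k, ?_⟩
    intro k' hk'
    apply Stmt14Aux.phi_inj hrf hv
    rw [Stmt14Aux.phi_sum hrf v k']
    exact hk'.symm
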